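/- arXiv:2202.11199 — 2 statements merged into one kernel-verified Lean document; each statement's English description precedes it below -/
import Mathlib

section
/- Let Σ' = [[Σ, Σβ], [βᵀΣ, σ_ε² + βᵀΣβ]] be the (d+1)×(d+1) block covariance matrix of the linear regression model, with Σ symmetric positive definite. Then the smallest eigenvalue of Σ' satisfies λ_min(Σ') ≥ σ_ε² λ_min(Σ) / (σ_ε² + βᵀΣβ + λ_min(Σ)). -/
/-!
Write a unit vector of `ℝ^(d+1)` as `z = (x, t)` and put `y = x + tβ`, so that
`zᵀΣ'z = yᵀΣy + σ²t²`. Since `x = y - tβ`, Cauchy–Schwarz for the form `Σ` gives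
`σ² xᵀΣx ≤ (σ² + βᵀΣβ) zᵀΣ'z`, and trivially `σ²t² ≤ zᵀΣ'z`. Weighting the second bound by
`λ_min(Σ)` and adding it to the first, together with `λ_min(Σ)|x|² ≤ xᵀΣx` and `|x|² + t² = 1`,
yields `σ² λ_min(Σ) ≤ (σ² + βᵀΣβ + λ_min(Σ)) zᵀΣ'z`.
-/

open Matrix

/-- The smallest eigenvalue of a symmetric matrix, as the infimum of the Rayleigh
quotient over the unit sphere. -/
noncomputable def lmin {n : Type*} [Fintype n] (M : Matrix n n ℝ) : ℝ :=
  ⨅ x : {x : n → ℝ // ∑ i, x i ^ 2 = 1}, (x : n → ℝ) ⬝ᵥ M.mulVec x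

/-- The largest eigenvalue of a symmetric matrix, as the supremum of the Rayleigh
quotient over the unit sphere. -/
noncomputable def lmax {n : Type*} [Fintype n] (M : Matrix n n ℝ) : ℝ :=
  ⨆ x : {x : n → ℝ // ∑ i, x i ^ 2 = 1}, (x : n → ℝ) ⬝ᵥ M.mulVec x

namespace Matrix

variable {n : Type*} [Fintype n] {S : Matrix n n ℝ}

lemma PosSemidef.dotProduct_mulVec_self_nonneg (hS : S.PosSemidef) (x : n → ℝ) :
    0 ≤ x ⬝ᵥ S *ᵥ x := by
  simpa using hS.dotProduct_mulVec_nonneg x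

lemma IsHermitian.dotProduct_mulVec_comm (hS : S.IsHermitian) (u v : n → ℝ) :
    u ⬝ᵥ S *ᵥ v = v ⬝ᵥ S *ᵥ u := by
  rw [dotProduct_mulVec, ← mulVec_transpose, ← conjTranspose_eq_transpose_of_trivial, hS,
    dotProduct_comm]

lemma PosSemidef.dotProduct_mulVec_sq_le (hS : S.PosSemidef) (u v : n → ℝ) :
    (u ⬝ᵥ S *ᵥ v) ^ 2 ≤ (u ⬝ᵥ S *ᵥ u) * (v ⬝ᵥ S *ᵥ v) := by
  classical
  rw [sq]
  nth_rw 2 [hS.1.dotProduct_mulVec_comm]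
  simpa only [toBilin'_apply'] using LinearMap.BilinForm.apply_mul_apply_le_of_forall_zero_le
    S.toBilin' (by simpa only [toBilin'_apply'] using hS.dotProduct_mulVec_self_nonneg) u v

lemma PosSemidef.mul_dotProduct_mulVec_sub_smul_le (hS : S.PosSemidef) (c t : ℝ)
    (y β : n → ℝ) :
    c * ((y - t • β) ⬝ᵥ S *ᵥ (y - t • β)) ≤
      (c + β ⬝ᵥ S *ᵥ β) * (y ⬝ᵥ S *ᵥ y + c * t ^ 2) := by
  have hexpand : (y - t • β) ⬝ᵥ S *ᵥ (y - t • β) =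
      y ⬝ᵥ S *ᵥ y - 2 * t * (y ⬝ᵥ S *ᵥ β) + t ^ 2 * (β ⬝ᵥ S *ᵥ β) := by
    simp only [mulVec_sub, mulVec_smul, dotProduct_sub, sub_dotProduct, dotProduct_smul,
      smul_dotProduct, smul_eq_mul, hS.1.dotProduct_mulVec_comm β y]
    ring
  rw [hexpand]
  -- the difference of the two sides is `(c t + yᵀSβ)² + (yᵀSy · βᵀSβ - (yᵀSβ)²)`
  nlinarith [sq_nonneg (c * t + y ⬝ᵥ S *ᵥ β), hS.dotProduct_mulVec_sq_le y β]

end Matrix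

section RayleighQuotient

variable {n : Type*} [Fintype n] {S : Matrix n n ℝ}

lemma lmin_nonneg (hS : S.PosSemidef) : 0 ≤ lmin S :=
  Real.iInf_nonneg fun x => hS.dotProduct_mulVec_self_nonneg x

lemma lmin_le_dotProduct_mulVec (hS : S.PosSemidef) {x : n → ℝ} (hx : ∑ i, x i ^ 2 = 1) :
    lmin S ≤ x ⬝ᵥ S *ᵥ x :=
  ciInf_le (f := fun z : {x : n → ℝ // ∑ i, x i ^ 2 = 1} => (z : n → ℝ) ⬝ᵥ S *ᵥ z)
    ⟨0, Set.forall_mem_range.mpr fun z => hS.dotProduct_mulVec_self_nonneg z⟩ ⟨x, hx⟩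

lemma lmin_mul_sum_sq_le (hS : S.PosSemidef) (x : n → ℝ) :
    lmin S * ∑ i, x i ^ 2 ≤ x ⬝ᵥ S *ᵥ x := by
  obtain ⟨r, hr0, hr2⟩ : ∃ r : ℝ, 0 ≤ r ∧ r ^ 2 = ∑ i, x i ^ 2 :=
    ⟨_, Real.sqrt_nonneg _, Real.sq_sqrt (by positivity)⟩
  rcases hr0.eq_or_lt with rfl | hr
  · rw [← hr2]; simpa using hS.dotProduct_mulVec_self_nonneg x
  have hunit : ∑ i, (r⁻¹ • x) i ^ 2 = 1 := by
    simp only [Pi.smul_apply, smul_eq_mul, mul_pow, ← Finset.mul_sum, ← hr2]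
    field_simp
  have hle := lmin_le_dotProduct_mulVec hS hunit
  rw [mulVec_smul, dotProduct_smul, smul_dotProduct, smul_eq_mul, smul_eq_mul] at hle
  rw [← hr2]
  calc lmin S * r ^ 2 ≤ r⁻¹ * (r⁻¹ * (x ⬝ᵥ S *ᵥ x)) * r ^ 2 := by gcongr
    _ = x ⬝ᵥ S *ᵥ x := by field_simp

end RayleighQuotient

section RegressionCovariance

variable {n : Type*} [Fintype n] {S : Matrix n n ℝ}

/-- The covariance matrix of `(X, βᵀX + ε)` when `Cov X = S`, `Var ε = v` and `ε` is
uncorrelated with `X`. -/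
def regressionCov (S : Matrix n n ℝ) (β : n → ℝ) (v : ℝ) :
    Matrix (n ⊕ Unit) (n ⊕ Unit) ℝ :=
  fromBlocks S (of fun i _ => (S *ᵥ β) i) (of fun _ j => (S *ᵥ β) j)
    (of fun _ _ => v + β ⬝ᵥ S *ᵥ β)

lemma dotProduct_regressionCov_mulVec (hS : S.IsHermitian) (β : n → ℝ) (v : ℝ)
    (z : n ⊕ Unit → ℝ) :
    z ⬝ᵥ regressionCov S β v *ᵥ z =
      (z ∘ Sum.inl + z (Sum.inr ()) • β) ⬝ᵥ S *ᵥ (z ∘ Sum.inl + z (Sum.inr ()) • β) +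
        v * z (Sum.inr ()) ^ 2 := by
  set x := z ∘ Sum.inl
  set t := z (Sum.inr ())
  have hz : z = Sum.elim x (fun _ => t) := by
    ext (i | _) <;> rfl
  have hB : (of fun i (_ : Unit) => (S *ᵥ β) i) *ᵥ (fun _ => t) = t • S *ᵥ β := by
    ext i; simp [mulVec, dotProduct, mul_comm]
  have hC : (of fun (_ : Unit) j => (S *ᵥ β) j) *ᵥ x = fun _ => x ⬝ᵥ S *ᵥ β := by
    ext; exact dotProduct_comm _ _
  have hD : (of fun (_ : Unit) (_ : Unit) => v + β ⬝ᵥ S *ᵥ β) *ᵥ (fun _ => t) =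
      fun _ => (v + β ⬝ᵥ S *ᵥ β) * t := by
    ext; simp [mulVec, dotProduct]
  have hUnit (w : Unit → ℝ) : (fun _ => t) ⬝ᵥ w = t * w () := Fintype.sum_unique _
  rw [hz, regressionCov, fromBlocks_mulVec, sumElim_dotProduct_sumElim,
    Sum.elim_comp_inl, Sum.elim_comp_inr, hB, hC, hD, hUnit]
  simp only [mulVec_add, mulVec_smul, dotProduct_add, add_dotProduct, dotProduct_smul,
    smul_dotProduct, smul_eq_mul, hS.dotProduct_mulVec_comm β x, Pi.add_apply]
  ring

lemma dotProduct_regressionCov_mulVec_nonneg (hS : S.PosSemidef) (β : n → ℝ) {v : ℝ}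
    (hv : 0 ≤ v) (z : n ⊕ Unit → ℝ) :
    0 ≤ z ⬝ᵥ regressionCov S β v *ᵥ z := by
  rw [dotProduct_regressionCov_mulVec hS.1]
  have := hS.dotProduct_mulVec_self_nonneg (z ∘ Sum.inl + z (Sum.inr ()) • β)
  positivity

lemma mul_lmin_le_dotProduct_regressionCov_mulVec (hS : S.PosSemidef) (β : n → ℝ) {v : ℝ}
    (hv : 0 ≤ v) {z : n ⊕ Unit → ℝ} (hz : ∑ i, z i ^ 2 = 1) :
    v * lmin S ≤ (z ⬝ᵥ regressionCov S β v *ᵥ z) * (v + β ⬝ᵥ S *ᵥ β + lmin S) := by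
  rw [dotProduct_regressionCov_mulVec hS.1]
  set x := z ∘ Sum.inl
  set t := z (Sum.inr ())
  have hxt : ∑ i, x i ^ 2 + t ^ 2 = 1 := by simpa [x, t, Fintype.sum_sum_type] using hz
  have hshift := hS.mul_dotProduct_mulVec_sub_smul_le v t (x + t • β) β
  rw [add_sub_cancel_right] at hshift
  have hy := hS.dotProduct_mulVec_self_nonneg (x + t • β)
  calc v * lmin S = v * (lmin S * ∑ i, x i ^ 2) + lmin S * (v * t ^ 2) := by
        linear_combination -(v * lmin S) * hxt
    _ ≤ (v + β ⬝ᵥ S *ᵥ β) * ((x + t • β) ⬝ᵥ S *ᵥ (x + t • β) + v * t ^ 2) +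
          lmin S * ((x + t • β) ⬝ᵥ S *ᵥ (x + t • β) + v * t ^ 2) := by
      refine add_le_add ?_ (mul_le_mul_of_nonneg_left (le_add_of_nonneg_left hy) (lmin_nonneg hS))
      exact (mul_le_mul_of_nonneg_left (lmin_mul_sum_sq_le hS x) hv).trans hshift
    _ = _ := by ring

end RegressionCovariance

theorem stmt13_general {d : ℕ} (S : Matrix (Fin d) (Fin d) ℝ) (hS : S.PosDef)
    (β : Fin d → ℝ) (σε : ℝ) :
    σε ^ 2 * lmin S / (σε ^ 2 + β ⬝ᵥ S.mulVec β + lmin S) ≤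
      lmin (Matrix.fromBlocks S
        (Matrix.of fun i (_ : Unit) => S.mulVec β i)
        (Matrix.of fun (_ : Unit) j => S.mulVec β j)
        (Matrix.of fun (_ : Unit) (_ : Unit) => σε ^ 2 + β ⬝ᵥ S.mulVec β)) := by
  change _ ≤ lmin (regressionCov S β (σε ^ 2))
  have hS := hS.posSemidef
  have hv : 0 ≤ σε ^ 2 := sq_nonneg σε
  have : Nonempty {z : Fin d ⊕ Unit → ℝ // ∑ i, z i ^ 2 = 1} :=
    ⟨⟨Pi.single (Sum.inr ()) 1, by simp⟩⟩
  refine le_ciInf fun ⟨z, hz⟩ => div_le_of_le_mul₀ ?_ ?_ ?_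
  · have := lmin_nonneg hS
    have := hS.dotProduct_mulVec_self_nonneg β
    positivity
  · exact dotProduct_regressionCov_mulVec_nonneg hS β hv z
  · exact mul_lmin_le_dotProduct_regressionCov_mulVec hS β hv hz

/-- for the regression block covariance matrix
`S' = [[S, Sβ], [βᵀS, σε² + βᵀSβ]]` with `S` symmetric positive definite and `σε > 0`,
`λ_min(S') ≥ σε² λ_min(S) / (σε² + βᵀSβ + λ_min(S))`. -/
theorem stmt13 {d : ℕ} (S : Matrix (Fin d) (Fin d) ℝ) (hS : S.PosDef)
    (β : Fin d → ℝ) (σε : ℝ) (hσ : 0 < σε) :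
    σε ^ 2 * lmin S / (σε ^ 2 + β ⬝ᵥ S.mulVec β + lmin S) ≤
      lmin (Matrix.fromBlocks S
        (Matrix.of fun i (_ : Unit) => S.mulVec β i)
        (Matrix.of fun (_ : Unit) j => S.mulVec β j)
        (Matrix.of fun (_ : Unit) (_ : Unit) => σε ^ 2 + β ⬝ᵥ S.mulVec β)) :=
  stmt13_general S hS β σε
end

section
/- Let M, M' be symmetric positive definite d×d matrices and Q₁ = M − S, Q₂ = v − u, where S is symmetric positive definite, v, u ∈ ℝ^d, β* = S^{-1}u, and β̂ = M^{-1}v. Then for any symmetric positive definite Σ, writing w* = Σ^{1/2}β* and ŵ = Σ^{1/2}β̂: ‖ŵ − w*‖₂² ≤ 2 ‖Σ^{1/2} M^{-1} Σ^{1/2}‖₂² (‖Σ^{-1/2} Q₁ Σ^{-1/2}‖₂² ‖w*‖₂² + ‖Σ^{-1/2} Q₂‖₂²). -/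
open Matrix

/-!
Write `R = Σ^{1/2}`. Since `M⁻¹ (M - S) S⁻¹ = S⁻¹ - M⁻¹`, the error `β̂ - β* = M⁻¹v - S⁻¹u` equals
`M⁻¹ (Q₂ - Q₁ β*)`, and inserting `R⁻¹ R` on both sides of every matrix turns this into
`ŵ - w* = (R M⁻¹ R) (R⁻¹ Q₂ - (R⁻¹ Q₁ R⁻¹) w*)`. The bound then follows from the operator norm
inequality and `(a + b)² ≤ 2a² + 2b²`.
-/

noncomputable def specNorm {d : ℕ} (M : Matrix (Fin d) (Fin d) ℝ) : ℝ :=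
  ‖Matrix.toEuclideanCLM (𝕜 := ℝ) M‖

/-- The square root of a positive semidefinite matrix, as defined in the older Mathlib. -/
noncomputable def Matrix.PosSemidef.sqrt {n 𝕜 : Type*} [Fintype n] [DecidableEq n] [RCLike 𝕜]
    [PartialOrder 𝕜] [StarOrderedRing 𝕜] {A : Matrix n n 𝕜} (hA : A.PosSemidef) : Matrix n n 𝕜 :=
  hA.1.eigenvectorUnitary.1 * diagonal ((↑) ∘ Real.sqrt ∘ hA.1.eigenvalues) *
  (star hA.1.eigenvectorUnitary : Matrix n n 𝕜)

theorem Matrix.PosSemidef.sqrt_mul_self {n : Type*} [Fintype n] [DecidableEq n]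
    {A : Matrix n n ℝ} (hA : A.PosSemidef) : hA.sqrt * hA.sqrt = A := by
  set U : Matrix n n ℝ := hA.1.eigenvectorUnitary.1
  set D : Matrix n n ℝ := diagonal ((↑) ∘ Real.sqrt ∘ hA.1.eigenvalues)
  have hU : star U * U = 1 := Unitary.coe_star_mul_self _
  have hD : D * D = diagonal ((↑) ∘ hA.1.eigenvalues) := by
    rw [diagonal_mul_diagonal]
    congr 1
    funext i
    simp [Real.mul_self_sqrt (hA.eigenvalues_nonneg i)]
  conv_rhs => rw [hA.1.spectral_theorem, Unitary.conjStarAlgAut_apply]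
  calc U * D * star U * (U * D * star U) = U * (D * (star U * U) * D) * star U := by
        simp only [mul_assoc]
    _ = _ := by rw [hU, mul_one, hD]; rfl

theorem Matrix.PosDef.isUnit_det_sqrt {n : Type*} [Fintype n] [DecidableEq n]
    {A : Matrix n n ℝ} (hA : A.PosDef) : IsUnit hA.posSemidef.sqrt.det :=
  (isUnit_iff_isUnit_det _).mp <|
    isUnit_of_mul_isUnit_left (hA.posSemidef.sqrt_mul_self ▸ hA.isUnit)

section Algebra

variable {n K : Type*} [Fintype n] [DecidableEq n] [Field K]

theorem inv_mulVec_sub_inv_mulVec {M S : Matrix n n K} (hM : IsUnit M.det) (hS : IsUnit S.det)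
    (u v : n → K) :
    M⁻¹ *ᵥ v - S⁻¹ *ᵥ u = M⁻¹ *ᵥ ((v - u) - (M - S) *ᵥ (S⁻¹ *ᵥ u)) := by
  have hSu : (M - S) *ᵥ (S⁻¹ *ᵥ u) = M *ᵥ (S⁻¹ *ᵥ u) - u := by
    rw [sub_mulVec, mulVec_mulVec _ S, mul_nonsing_inv S hS, one_mulVec]
  rw [hSu, sub_sub_sub_cancel_right, mulVec_sub, mulVec_mulVec _ M⁻¹, nonsing_inv_mul M hM,
    one_mulVec]

theorem mulVec_mulVec_eq_conj_mulVec {R : Matrix n n K} (hR : IsUnit R.det) (N : Matrix n n K)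
    (x : n → K) : R *ᵥ (N *ᵥ x) = (R * N * R) *ᵥ (R⁻¹ *ᵥ x) := by
  rw [mulVec_mulVec, mulVec_mulVec, mul_assoc, mul_nonsing_inv R hR, mul_one]

theorem mulVec_inv_sub_mulVec_inv_eq_conj {R M S : Matrix n n K} (hR : IsUnit R.det)
    (hM : IsUnit M.det) (hS : IsUnit S.det) (u v : n → K) :
    R *ᵥ (M⁻¹ *ᵥ v) - R *ᵥ (S⁻¹ *ᵥ u) =
      (R * M⁻¹ * R) *ᵥ (R⁻¹ *ᵥ (v - u) - (R⁻¹ * (M - S) * R⁻¹) *ᵥ (R *ᵥ (S⁻¹ *ᵥ u))) := by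
  have hRinv : IsUnit R⁻¹.det := isUnit_nonsing_inv_det_iff.mpr hR
  rw [← mulVec_sub, inv_mulVec_sub_inv_mulVec hM hS, mulVec_mulVec_eq_conj_mulVec hR, mulVec_sub,
    mulVec_mulVec_eq_conj_mulVec hRinv, nonsing_inv_nonsing_inv R hR]

end Algebra

theorem ContinuousLinearMap.norm_apply_sub_apply_sq_le {𝕜 E F : Type*} [NontriviallyNormedField 𝕜]
    [SeminormedAddCommGroup E] [NormedSpace 𝕜 E] [SeminormedAddCommGroup F] [NormedSpace 𝕜 F]
    (A : E →L[𝕜] F) (B : E →L[𝕜] E) (y w : E) :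
    ‖A (y - B w)‖ ^ 2 ≤ 2 * ‖A‖ ^ 2 * (‖B‖ ^ 2 * ‖w‖ ^ 2 + ‖y‖ ^ 2) := by
  have hBw : ‖y - B w‖ ≤ ‖B‖ * ‖w‖ + ‖y‖ :=
    calc ‖y - B w‖ ≤ ‖y‖ + ‖B w‖ := norm_sub_le _ _
      _ ≤ ‖B‖ * ‖w‖ + ‖y‖ := by rw [add_comm]; gcongr; exact B.le_opNorm w
  calc ‖A (y - B w)‖ ^ 2 ≤ (‖A‖ * (‖B‖ * ‖w‖ + ‖y‖)) ^ 2 := by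
        gcongr; exact (A.le_opNorm _).trans (by gcongr)
    _ = ‖A‖ ^ 2 * (‖B‖ * ‖w‖ + ‖y‖) ^ 2 := mul_pow _ _ _
    _ ≤ ‖A‖ ^ 2 * (2 * ((‖B‖ * ‖w‖) ^ 2 + ‖y‖ ^ 2)) := by gcongr; exact add_sq_le
    _ = 2 * ‖A‖ ^ 2 * (‖B‖ ^ 2 * ‖w‖ ^ 2 + ‖y‖ ^ 2) := by ring

theorem sum_sq_mulVec_sub_mulVec_le {d : ℕ} (A B : Matrix (Fin d) (Fin d) ℝ) (y w : Fin d → ℝ) :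
    ∑ i, (A *ᵥ (y - B *ᵥ w)) i ^ 2 ≤
      2 * specNorm A ^ 2 * (specNorm B ^ 2 * ∑ i, w i ^ 2 + ∑ i, y i ^ 2) := by
  have h := (toEuclideanCLM (𝕜 := ℝ) A).norm_apply_sub_apply_sq_le (toEuclideanCLM (𝕜 := ℝ) B)
    (WithLp.toLp 2 y) (WithLp.toLp 2 w)
  simpa only [EuclideanSpace.real_norm_sq_eq, toEuclideanCLM_toLp, ← WithLp.toLp_sub,
    specNorm] using h

/-- the core error-decomposition inequality for the private LSE.
With `Q₁ = M − S`, `Q₂ = v − u`, `β* = S⁻¹u`, `β̂ = M⁻¹v`, `w* = Σ^{1/2}β*`,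
`ŵ = Σ^{1/2}β̂` (all matrices symmetric positive definite):
`‖ŵ − w*‖₂² ≤ 2‖Σ^{1/2}M⁻¹Σ^{1/2}‖₂² (‖Σ^{-1/2}Q₁Σ^{-1/2}‖₂²‖w*‖₂² + ‖Σ^{-1/2}Q₂‖₂²)`. -/
theorem stmt17 {d : ℕ} (M S Sig : Matrix (Fin d) (Fin d) ℝ)
    (hM : M.PosDef) (hS : S.PosDef) (hSig : Sig.PosDef)
    (u v : Fin d → ℝ) :
    let Q₁ := M - S
    let Q₂ := v - u
    let βstar := S⁻¹.mulVec u
    let βhat := M⁻¹.mulVec v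
    let sq := hSig.posSemidef.sqrt
    let wstar := sq.mulVec βstar
    let what := sq.mulVec βhat
    (∑ i, (what i - wstar i) ^ 2) ≤
      2 * specNorm (sq * M⁻¹ * sq) ^ 2 *
        (specNorm (sq⁻¹ * Q₁ * sq⁻¹) ^ 2 * (∑ i, wstar i ^ 2) +
          ∑ i, sq⁻¹.mulVec Q₂ i ^ 2) := by
  intro Q₁ Q₂ βstar βhat sq wstar what
  have herr : what - wstar = (sq * M⁻¹ * sq) *ᵥ (sq⁻¹ *ᵥ Q₂ - (sq⁻¹ * Q₁ * sq⁻¹) *ᵥ wstar) :=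
    mulVec_inv_sub_mulVec_inv_eq_conj hSig.isUnit_det_sqrt ((isUnit_iff_isUnit_det M).mp hM.isUnit)
      ((isUnit_iff_isUnit_det S).mp hS.isUnit) u v
  calc ∑ i, (what i - wstar i) ^ 2 = ∑ i, (what - wstar) i ^ 2 := rfl
    _ ≤ _ := herr ▸ sum_sq_mulVec_sub_mulVec_le _ _ _ _
end
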